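/- arXiv:1211.3224 — 3 statements merged into one kernel-verified Lean document; each statement's English description precedes it below -/
import Mathlib

section
/- Let d ≥ 2 and let n, r be positive integers with r ≤ n. For every polytope P ∈ 𝒫_r there exists a polytope P* ∈ 𝒫_r^{(n)} such that |P* △ P| ≤ 2 d^{d+1} (3/2)^d β_d / n. -/
open MeasureTheory Set Real Pointwise ProbabilityTheory

noncomputable section

/-- The unit cube `[0,1]^d`. -/
def cube (d : ℕ) : Set (EuclideanSpace ℝ (Fin d)) := {x | ∀ i, x i ∈ Set.Icc (0:ℝ) 1}

/-- Volume of the unit Euclidean ball in dimension `d`. -/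
def unitBallVol (d : ℕ) : ℝ :=
  (volume (Metric.closedBall (0 : EuclideanSpace ℝ (Fin d)) 1)).toReal

/-- Law of one observation `(X, 1_G(X) + ξ)`. -/
def regMeasure (d : ℕ) (ν : Measure ℝ) (G : Set (EuclideanSpace ℝ (Fin d))) :
    Measure (EuclideanSpace ℝ (Fin d) × ℝ) :=
  Measure.map (fun p => (p.1, G.indicator (fun _ => (1:ℝ)) p.1 + p.2))
    ((volume.restrict (cube d)).prod ν)

/-- Law of `n` i.i.d. observations. -/
def sampleLaw (d n : ℕ) (ν : Measure ℝ) (G : Set (EuclideanSpace ℝ (Fin d))) :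
    Measure (Fin n → EuclideanSpace ℝ (Fin d) × ℝ) :=
  Measure.pi (fun _ => regMeasure d ν G)

/-- Assumption A : σ-subgaussian noise. -/
def SubGaussian (ν : Measure ℝ) (σ : ℝ) : Prop :=
  ∀ u : ℝ, ∫ t, Real.exp (u * t) ∂ν ≤ Real.exp (u^2 * σ^2 / 2)

/-- Polytopes in `[0,1]^d` with at most `r` vertices. -/
def polytopes (d r : ℕ) : Set (Set (EuclideanSpace ℝ (Fin d))) :=
  {P | ∃ V : Finset (EuclideanSpace ℝ (Fin d)), V.card ≤ r ∧ ↑V ⊆ cube d ∧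
    P = convexHull ℝ (V : Set (EuclideanSpace ℝ (Fin d)))}

/-- Polytopes in `[0,1]^d` with at most `r` vertices whose coordinates are
integer multiples of `1/n`. -/
def gridPolytopes (d r n : ℕ) : Set (Set (EuclideanSpace ℝ (Fin d))) :=
  {P | ∃ V : Finset (EuclideanSpace ℝ (Fin d)), V.card ≤ r ∧ ↑V ⊆ cube d ∧
    (∀ v ∈ V, ∀ i, ∃ k : ℤ, v i = k / n) ∧
    P = convexHull ℝ (V : Set (EuclideanSpace ℝ (Fin d)))}

/-- Compact convex subsets of `[0,1]^d`. -/
def convexSets (d : ℕ) : Set (Set (EuclideanSpace ℝ (Fin d))) :=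
  {C | Convex ℝ C ∧ IsCompact C ∧ C ⊆ cube d}

/-- Least squares criterion. -/
def crit {d n : ℕ} (P : Set (EuclideanSpace ℝ (Fin d)))
    (ω : Fin n → EuclideanSpace ℝ (Fin d) × ℝ) : ℝ :=
  ∑ i, (1 - 2 * (ω i).2) * P.indicator (fun _ => (1:ℝ)) (ω i).1

/-- `hatP` is a least squares estimator over `𝒫_r^{(n)}`. -/
def IsLSE (d r n : ℕ)
    (hatP : (Fin n → EuclideanSpace ℝ (Fin d) × ℝ) → Set (EuclideanSpace ℝ (Fin d))) :
    Prop :=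
  (∀ ω, hatP ω ∈ gridPolytopes d r n ∧ ∀ Q ∈ gridPolytopes d r n, crit (hatP ω) ω ≤ crit Q ω)
  ∧ Measurable (fun p : (EuclideanSpace ℝ (Fin d)) × (Fin n → EuclideanSpace ℝ (Fin d) × ℝ) =>
      (hatP p.2).indicator (fun _ => (1:ℝ)) p.1)

/-- A set estimator : measurable set-valued map with values Borel subsets of the cube. -/
def IsSetEstimator (d n : ℕ)
    (hatG : (Fin n → EuclideanSpace ℝ (Fin d) × ℝ) → Set (EuclideanSpace ℝ (Fin d))) :
    Prop :=
  (∀ ω, hatG ω ⊆ cube d ∧ MeasurableSet (hatG ω))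
  ∧ Measurable (fun p : (EuclideanSpace ℝ (Fin d)) × (Fin n → EuclideanSpace ℝ (Fin d) × ℝ) =>
      (hatG p.2).indicator (fun _ => (1:ℝ)) p.1)

/-- Nikodym (pseudo-)distance : Lebesgue measure of the symmetric difference. -/
def sdVol {d : ℕ} (G₁ G₂ : Set (EuclideanSpace ℝ (Fin d))) : ℝ :=
  (volume (symmDiff G₁ G₂)).toReal

/-!
Round every vertex down to the grid `(1/n) ℤ^d`. Each vertex moves by at most `η = 1/n` in every
coordinate, so each of the two hulls lies in the other one plus the box `Q = [-η, η]^d`, and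
their symmetric difference is covered by the two shells `(K + Q) \ K`.

`Q` is the Minkowski sum of `d` axis segments of length `2η`. Adding a segment of length `ℓ` in
the direction `e i` to a convex body inside the box `[-c, c]^d` lengthens each line slice parallel
to `e i` by at most `ℓ`, so by Fubini the volume grows by at most `ℓ (2c)^(d-1)`. With `c = 2`
(the body together with the segments added so far) each shell has volume at most
`d · 2η · 4^(d-1)`, and the symmetric difference at most `d 4^d / n`. The claimed constant is
larger, since the cube `[-1/√d, 1/√d]^d` inside the unit ball gives `β_d ≥ (2/√d)^d`, and
`4 ≤ 3√d` for `d ≥ 2`.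
-/

open Function
open scoped ENNReal

theorem Convex.volume_add_Icc_le {C : Set ℝ} (hC : Convex ℝ C) (hCb : Bornology.IsBounded C)
    {a b : ℝ} (hab : a ≤ b) : volume (C + Icc a b) ≤ volume C + ENNReal.ofReal (b - a) := by
  rcases C.eq_empty_or_nonempty with rfl | hne
  · simp
  have hsub : C + Icc a b ⊆ Icc (sInf C + a) (sSup C + b) := by
    rintro _ ⟨c, hc, t, ht, rfl⟩
    exact ⟨add_le_add (csInf_le hCb.bddBelow hc) ht.1, add_le_add (le_csSup hCb.bddAbove hc) ht.2⟩
  have hIoo : Ioo (sInf C) (sSup C) ⊆ C :=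
    (hC.isConnected hne).Ioo_csInf_csSup_subset hCb.bddBelow hCb.bddAbove
  have hInf_le_Sup := csInf_le_csSup hne hCb.bddBelow hCb.bddAbove
  calc volume (C + Icc a b) ≤ volume (Icc (sInf C + a) (sSup C + b)) := measure_mono hsub
    _ = ENNReal.ofReal (sSup C - sInf C) + ENNReal.ofReal (b - a) := by
      rw [Real.volume_Icc, ← ENNReal.ofReal_add (by linarith) (by linarith)]
      ring_nf
    _ ≤ volume C + ENNReal.ofReal (b - a) := by
      gcongr
      rw [← Real.volume_Ioo]
      exact measure_mono hIoo

section Slices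

variable {ι : Type*} [DecidableEq ι]

theorem Convex.preimage_update {A : Set (ι → ℝ)} (hA : Convex ℝ A) (x : ι → ℝ) (i : ι) :
    Convex ℝ (update x i ⁻¹' A) := by
  refine convex_iff_segment_subset.2 fun c₁ h₁ c₂ h₂ => ?_
  rw [← image_subset_iff, Pi.image_update_segment]
  exact hA.segment_subset h₁ h₂

theorem preimage_update_add_image_single (A : Set (ι → ℝ)) (S : Set ℝ) (x : ι → ℝ) (i : ι) :
    update x i ⁻¹' (A + Pi.single i '' S) = update x i ⁻¹' A + S := by
  ext t
  constructor
  · rintro ⟨p, hp, _, ⟨s, hs, rfl⟩, hpt⟩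
    refine ⟨t - s, ?_, s, hs, sub_add_cancel t s⟩
    have hsingle : Pi.single i s = update (0 : ι → ℝ) i s := rfl
    rwa [mem_preimage, ← sub_zero x, update_sub, ← hsingle, ← hpt, add_sub_cancel_right]
  · rintro ⟨u, hu, s, hs, rfl⟩
    refine ⟨_, hu, _, mem_image_of_mem _ hs, ?_⟩
    have hsingle : Pi.single i s = update (0 : ι → ℝ) i s := rfl
    change update x i u + Pi.single i s = update x i (u + s)
    rw [hsingle, ← update_add, add_zero]

theorem lintegral_indicator_one_update {s : Set (ι → ℝ)} (hs : MeasurableSet s) (x : ι → ℝ)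
    (i : ι) : ∫⁻ t, s.indicator 1 (update x i t) = volume (update x i ⁻¹' s) :=
  lintegral_indicator_one (measurable_update x hs)

theorem lintegral_le_of_forall_lintegral_update_le [Fintype ι] {f g : (ι → ℝ) → ℝ≥0∞}
    (hf : Measurable f) (hg : Measurable g) (i : ι)
    (h : ∀ x, ∫⁻ t, f (update x i t) ≤ ∫⁻ t, g (update x i t)) :
    ∫⁻ x, f x ≤ ∫⁻ x, g x := by
  rw [volume_pi, lintegral_eq_lmarginal_univ 0, lintegral_eq_lmarginal_univ 0,
    lmarginal_erase' f hf (Finset.mem_univ i), lmarginal_erase' g hg (Finset.mem_univ i)]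
  exact lmarginal_mono h 0

theorem volume_pi_update_Icc [Fintype ι] (c a b : ℝ) (i : ι) :
    volume (Set.pi univ (update (fun _ => Icc (-c) c) i (Icc a b)))
      = ENNReal.ofReal (b - a) * ENNReal.ofReal (2 * c) ^ (Fintype.card ι - 1) := by
  rw [volume_pi_pi]
  simp_rw [apply_update (fun _ => (volume : Measure ℝ)), Real.volume_Icc]
  rw [Finset.prod_update_of_mem (Finset.mem_univ i), Finset.prod_const, Finset.card_univ_sdiff,
    Finset.card_singleton, sub_neg_eq_add, ← two_mul]

theorem volume_add_image_single_Icc_le [Fintype ι] {A : Set (ι → ℝ)} (hAc : IsCompact A)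
    (hAconv : Convex ℝ A) {c : ℝ} (hAb : A ⊆ Metric.closedBall 0 c) (i : ι) {a b : ℝ}
    (hab : a ≤ b) :
    volume (A + Pi.single i '' Icc a b)
      ≤ volume A + ENNReal.ofReal (b - a) * ENNReal.ofReal (2 * c) ^ (Fintype.card ι - 1) := by
  -- A slice parallel to `e i` grows by at most `b - a`, and is nonempty only above
  -- `[-c, c]^(ι \ {i})`: the gain is bounded slice by slice by the slice of `slab`.
  set slab := Set.pi univ (update (fun _ => Icc (-c) c) i (Icc a b))
  have hslab : MeasurableSet slab := by
    refine MeasurableSet.univ_pi fun j => ?_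
    rcases eq_or_ne j i with rfl | hj
    · simp [measurableSet_Icc]
    · simp [hj, measurableSet_Icc]
  have hsum : MeasurableSet (A + Pi.single i '' Icc a b) :=
    (hAc.add (isCompact_Icc.image (continuous_single i))).measurableSet
  have hA := hAc.measurableSet
  have hslice : ∀ x, volume (update x i ⁻¹' (A + Pi.single i '' Icc a b))
      ≤ volume (update x i ⁻¹' A) + volume (update x i ⁻¹' slab) := by
    intro x
    rw [preimage_update_add_image_single]
    rcases (update x i ⁻¹' A).eq_empty_or_nonempty with hC | ⟨t₀, ht₀⟩
    · simp [hC]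
    have hx : ∀ j ≠ i, x j ∈ update (fun _ => Icc (-c) c) i (Icc a b) j := fun j hj => by
      rw [update_of_ne hj, mem_Icc, ← abs_le, ← Real.norm_eq_abs, ← update_of_ne hj t₀ x]
      exact (norm_le_pi_norm _ j).trans (mem_closedBall_zero_iff.1 (hAb ht₀))
    have hCb : Bornology.IsBounded (update x i ⁻¹' A) := by
      refine (Metric.isBounded_closedBall (x := (0 : ℝ)) (r := c)).subset fun t ht => ?_
      rw [mem_closedBall_zero_iff, ← update_self i t x]
      exact (norm_le_pi_norm _ i).trans (mem_closedBall_zero_iff.1 (hAb ht))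
    rw [update_preimage_univ_pi hx, update_self, Real.volume_Icc]
    exact (hAconv.preimage_update x i).volume_add_Icc_le hCb hab
  calc volume (A + Pi.single i '' Icc a b)
      = ∫⁻ x, (A + Pi.single i '' Icc a b).indicator 1 x := (lintegral_indicator_one hsum).symm
    _ ≤ ∫⁻ x, (A.indicator 1 + slab.indicator 1 : (ι → ℝ) → ℝ≥0∞) x := by
      refine lintegral_le_of_forall_lintegral_update_le (measurable_one.indicator hsum)
        ((measurable_one.indicator hA).add (measurable_one.indicator hslab)) i fun x => ?_
      have hAx : Measurable fun t => A.indicator (1 : (ι → ℝ) → ℝ≥0∞) (update x i t) :=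
        (measurable_one.indicator hA).comp (measurable_update x)
      simp only [Pi.add_apply]
      rw [lintegral_add_left hAx, lintegral_indicator_one_update hsum,
        lintegral_indicator_one_update hA, lintegral_indicator_one_update hslab]
      exact hslice x
    _ = volume A + volume slab := by
      simp only [Pi.add_apply]
      rw [lintegral_add_left (measurable_one.indicator hA), lintegral_indicator_one hA,
        lintegral_indicator_one hslab]
    _ = _ := by rw [volume_pi_update_Icc]

end Slices

section PartialBox

variable {ι : Type*} [DecidableEq ι]

def partialBox (s : Finset ι) (I : Set ℝ) : Set (ι → ℝ) :=
  Set.pi univ fun j => if j ∈ s then I else {0}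

theorem partialBox_empty (I : Set ℝ) : partialBox (∅ : Finset ι) I = {0} := by
  simp [partialBox, ← univ_pi_singleton]

theorem partialBox_univ [Fintype ι] (I : Set ℝ) :
    partialBox (Finset.univ : Finset ι) I = Set.pi univ fun _ => I := by
  simp [partialBox]

theorem partialBox_insert {s : Finset ι} {i : ι} (hi : i ∉ s) (I : Set ℝ) :
    partialBox (insert i s) I = partialBox s I + Pi.single i '' I := by
  ext u
  simp only [partialBox, mem_pi, mem_univ, true_implies, Finset.mem_insert]
  constructor
  · intro hu
    refine ⟨update u i 0, fun j => ?_, Pi.single i (u i), ⟨u i, by simpa using hu i, rfl⟩, ?_⟩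
    · rcases eq_or_ne j i with rfl | hj
      · simp [hi]
      · simpa [hj] using hu j
    · ext j
      rcases eq_or_ne j i with rfl | hj <;> simp [*]
  · rintro ⟨p, hp, _, ⟨t, ht, rfl⟩, rfl⟩ j
    rcases eq_or_ne j i with rfl | hj
    · simpa [hi, show p j = 0 by simpa [hi] using hp j] using ht
    · simpa [hj] using hp j

theorem IsCompact.partialBox {I : Set ℝ} (hI : IsCompact I) (s : Finset ι) :
    IsCompact (partialBox s I) :=
  isCompact_univ_pi fun j => by split_ifs; exacts [hI, isCompact_singleton]

theorem Convex.partialBox {I : Set ℝ} (hI : Convex ℝ I) (s : Finset ι) :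
    Convex ℝ (partialBox s I) :=
  convex_pi fun j _ => by split_ifs; exacts [hI, convex_singleton 0]

theorem partialBox_subset_closedBall [Fintype ι] {I : Set ℝ} {c : ℝ} (hc : 0 ≤ c)
    (hI : I ⊆ Metric.closedBall 0 c) (s : Finset ι) :
    partialBox s I ⊆ Metric.closedBall 0 c := fun u hu => by
  refine mem_closedBall_zero_iff.2 ((pi_norm_le_iff_of_nonneg hc).2 fun j => ?_)
  have huj : u j ∈ if j ∈ s then I else {0} := hu j (mem_univ j)
  split_ifs at huj
  · exact mem_closedBall_zero_iff.1 (hI huj)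
  · simpa [mem_singleton_iff.1 huj] using hc

theorem volume_add_partialBox_le [Fintype ι] {A : Set (ι → ℝ)} (hAc : IsCompact A)
    (hAconv : Convex ℝ A) {c : ℝ} (hAb : A ⊆ Metric.closedBall 0 c) {a b : ℝ} (hab : a ≤ b)
    (ha : -c ≤ a) (hb : b ≤ c) (s : Finset ι) :
    volume (A + partialBox s (Icc a b)) ≤ volume A
      + s.card * (ENNReal.ofReal (b - a) * ENNReal.ofReal (4 * c) ^ (Fintype.card ι - 1)) := by
  induction s using Finset.induction_on with
  | empty => simp [partialBox_empty]
  | @insert i s hi ih =>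
    have hc : 0 ≤ c := by linarith
    have hbox : partialBox s (Icc a b) ⊆ Metric.closedBall 0 c := by
      refine partialBox_subset_closedBall hc ?_ s
      rw [Real.closedBall_eq_Icc, zero_sub, zero_add]
      exact Icc_subset_Icc ha hb
    have hsum : A + partialBox s (Icc a b) ⊆ Metric.closedBall 0 (2 * c) := by
      rw [two_mul, ← add_zero (0 : ι → ℝ), ← closedBall_add_closedBall hc hc]
      exact add_subset_add hAb hbox
    calc volume (A + partialBox (insert i s) (Icc a b))
        = volume (A + partialBox s (Icc a b) + Pi.single i '' Icc a b) := by
          rw [partialBox_insert hi, add_assoc]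
      _ ≤ volume (A + partialBox s (Icc a b))
            + ENNReal.ofReal (b - a) * ENNReal.ofReal (2 * (2 * c)) ^ (Fintype.card ι - 1) :=
          volume_add_image_single_Icc_le (hAc.add (isCompact_Icc.partialBox s))
            (hAconv.add ((convex_Icc a b).partialBox s)) hsum i hab
      _ ≤ _ := by
          rw [show 2 * (2 * c) = 4 * c by ring, Finset.card_insert_of_notMem hi, Nat.cast_succ,
            add_one_mul, ← add_assoc]
          gcongr

end PartialBox

theorem volume_add_pi_Icc_diff_le {ι : Type*} [Fintype ι] {A : Set (ι → ℝ)}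
    (hAc : IsCompact A) (hAconv : Convex ℝ A) {c : ℝ} (hAb : A ⊆ Metric.closedBall 0 c)
    {a b : ℝ} (ha0 : a ≤ 0) (h0b : 0 ≤ b) (ha : -c ≤ a) (hb : b ≤ c) :
    volume ((A + Set.pi univ fun _ => Icc a b) \ A)
      ≤ Fintype.card ι
          * (ENNReal.ofReal (b - a) * ENNReal.ofReal (4 * c) ^ (Fintype.card ι - 1)) := by
  classical
  have hsub : A ⊆ A + Set.pi univ fun _ => Icc a b := fun x hx =>
    ⟨x, hx, 0, fun _ _ => ⟨ha0, h0b⟩, add_zero x⟩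
  rw [measure_sdiff hsub hAc.measurableSet.nullMeasurableSet (hAc.measure_lt_top).ne,
    tsub_le_iff_left, ← partialBox_univ, ← Finset.card_univ]
  exact volume_add_partialBox_le hAc hAconv hAb (ha0.trans h0b) ha hb _

namespace EuclideanSpace

variable {ι : Type*}

theorem convex_box (a b : ℝ) : Convex ℝ {u : EuclideanSpace ℝ ι | ∀ i, u i ∈ Icc a b} :=
  fun _ hx _ hy _ _ hs ht hst i => by
    simpa using convex_Icc a b (hx i) (hy i) hs ht hst

theorem volume_box [Fintype ι] (a b : ℝ) :
    volume {u : EuclideanSpace ℝ ι | ∀ i, u i ∈ Icc a b}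
      = ENNReal.ofReal (b - a) ^ Fintype.card ι := by
  have hbox : WithLp.ofLp ⁻¹' Set.pi univ (fun _ => Icc a b)
      = {u : EuclideanSpace ℝ ι | ∀ i, u i ∈ Icc a b} := by
    ext u
    simp only [mem_preimage, mem_pi, mem_univ, true_implies]
    rfl
  rw [← hbox, (PiLp.volume_preserving_ofLp ι).measure_preimage
    (MeasurableSet.univ_pi fun _ => measurableSet_Icc).nullMeasurableSet, volume_pi_pi,
    Finset.prod_const, Real.volume_Icc, Finset.card_univ]

theorem volume_add_box_diff_le [Fintype ι] {K : Set (EuclideanSpace ℝ ι)} (hKc : IsCompact K)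
    (hKconv : Convex ℝ K) {c : ℝ} (hKb : K ⊆ {u | ∀ i, u i ∈ Icc (-c) c}) {a b : ℝ}
    (ha0 : a ≤ 0) (h0b : 0 ≤ b) (ha : -c ≤ a) (hb : b ≤ c) :
    volume ((K + {u | ∀ i, u i ∈ Icc a b}) \ K)
      ≤ Fintype.card ι
          * (ENNReal.ofReal (b - a) * ENNReal.ofReal (4 * c) ^ (Fintype.card ι - 1)) := by
  let L := WithLp.linearEquiv 2 ℝ (ι → ℝ)
  have hL : ∀ S : Set (EuclideanSpace ℝ ι), MeasurableSet S → volume (L '' S) = volume S :=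
    fun S hS => by
      rw [L.image_eq_preimage_symm]
      exact (PiLp.volume_preserving_toLp ι).measure_preimage hS.nullMeasurableSet
  have hQ : {u : EuclideanSpace ℝ ι | ∀ i, u i ∈ Icc a b}
      = WithLp.toLp 2 '' Set.pi univ fun _ => Icc a b := by
    ext u
    constructor
    · exact fun hu => ⟨WithLp.ofLp u, fun i _ => hu i, rfl⟩
    · rintro ⟨x, hx, rfl⟩ i
      exact hx i (mem_univ i)
  have hQc : IsCompact {u : EuclideanSpace ℝ ι | ∀ i, u i ∈ Icc a b} := by
    rw [hQ]
    exact (isCompact_univ_pi fun _ => isCompact_Icc).image (PiLp.continuous_toLp 2 _)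
  have hc : 0 ≤ c := by linarith
  have hLK : L '' K ⊆ Metric.closedBall 0 c := by
    rintro _ ⟨x, hx, rfl⟩
    exact mem_closedBall_zero_iff.2 ((pi_norm_le_iff_of_nonneg hc).2 fun i => abs_le.2 (hKb hx i))
  rw [← hL _ ((hKc.add hQc).measurableSet.diff hKc.measurableSet), image_sdiff L.injective,
    image_add, hQ, image_image]
  simp only [show ∀ x, L (WithLp.toLp 2 x) = x from fun _ => rfl, image_id']
  exact volume_add_pi_Icc_diff_le (A := L '' K) (hKc.image (PiLp.continuous_ofLp 2 _))
    (hKconv.linear_image L.toLinearMap) hLK ha0 h0b ha hb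

end EuclideanSpace

theorem convexHull_subset_convexHull_add {E : Type*} [AddCommGroup E] [Module ℝ E]
    {s t Q : Set E} (hQ : Convex ℝ Q) (h : ∀ x ∈ s, ∃ y ∈ t, x - y ∈ Q) :
    convexHull ℝ s ⊆ convexHull ℝ t + Q :=
  convexHull_min (fun x hx => by
      obtain ⟨y, hy, hxy⟩ := h x hx
      exact ⟨y, subset_convexHull ℝ t hy, x - y, hxy, add_sub_cancel y x⟩)
    ((convex_convexHull ℝ t).add hQ)

theorem symmDiff_subset_of_subset_add {E : Type*} [Add E] {A B Q : Set E} (hA : A ⊆ B + Q)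
    (hB : B ⊆ A + Q) : symmDiff A B ⊆ ((B + Q) \ B) ∪ ((A + Q) \ A) := by
  rw [Set.symmDiff_def]
  exact union_subset_union (sdiff_subset_sdiff_left hA) (sdiff_subset_sdiff_left hB)

theorem volume_symmDiff_convexHull_le {ι : Type*} [Fintype ι]
    {V W : Finset (EuclideanSpace ℝ ι)} {c η : ℝ}
    (hV : ↑V ⊆ {u : EuclideanSpace ℝ ι | ∀ i, u i ∈ Icc (-c) c})
    (hW : ↑W ⊆ {u : EuclideanSpace ℝ ι | ∀ i, u i ∈ Icc (-c) c}) (hη0 : 0 ≤ η) (hηc : η ≤ c)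
    (hVW : ∀ v ∈ V, ∃ w ∈ W, ∀ i, |v i - w i| ≤ η)
    (hWV : ∀ w ∈ W, ∃ v ∈ V, ∀ i, |w i - v i| ≤ η) :
    volume (symmDiff (convexHull ℝ (W : Set (EuclideanSpace ℝ ι))) (convexHull ℝ ↑V))
      ≤ ENNReal.ofReal (4 * Fintype.card ι * η * (4 * c) ^ (Fintype.card ι - 1)) := by
  set Q := {u : EuclideanSpace ℝ ι | ∀ i, u i ∈ Icc (-η) η}
  have hshell : ∀ U : Finset (EuclideanSpace ℝ ι),
      ↑U ⊆ {u : EuclideanSpace ℝ ι | ∀ i, u i ∈ Icc (-c) c} →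
      volume ((convexHull ℝ ↑U + Q) \ convexHull ℝ ↑U) ≤ Fintype.card ι
        * (ENNReal.ofReal (η - -η) * ENNReal.ofReal (4 * c) ^ (Fintype.card ι - 1)) :=
    fun U hU => EuclideanSpace.volume_add_box_diff_le
      (U.finite_toSet.isCompact_convexHull (𝕜 := ℝ)) (convex_convexHull ℝ _)
      (convexHull_min hU (EuclideanSpace.convex_box _ _)) (by linarith) hη0 (by linarith) hηc
  have hsub : ∀ {s t : Finset (EuclideanSpace ℝ ι)},
      (∀ x ∈ s, ∃ y ∈ t, ∀ i, |x i - y i| ≤ η) →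
      convexHull ℝ (s : Set (EuclideanSpace ℝ ι)) ⊆ convexHull ℝ ↑t + Q := fun h =>
    convexHull_subset_convexHull_add (EuclideanSpace.convex_box _ _) fun x hx => by
      obtain ⟨y, hy, hxy⟩ := h x hx
      exact ⟨y, hy, fun i => abs_le.1 (hxy i)⟩
  refine (measure_mono (symmDiff_subset_of_subset_add (hsub hWV) (hsub hVW))).trans
    ((measure_union_le _ _).trans ?_)
  have hc : 0 ≤ 4 * c := by linarith
  grw [hshell V hV, hshell W hW]
  rw [← ENNReal.ofReal_natCast, ← ENNReal.ofReal_pow hc, ← ENNReal.ofReal_mul (by linarith),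
    ← ENNReal.ofReal_mul (Nat.cast_nonneg _)]
  have hX : 0 ≤ (Fintype.card ι : ℝ) * ((η - -η) * (4 * c) ^ (Fintype.card ι - 1)) :=
    mul_nonneg (Nat.cast_nonneg _) (mul_nonneg (by linarith) (pow_nonneg hc _))
  rw [← ENNReal.ofReal_add hX hX]
  exact le_of_eq (congrArg ENNReal.ofReal (by ring))

section Grid

variable {ι : Type*}

def gridFloor (n : ℕ) (v : EuclideanSpace ℝ ι) : EuclideanSpace ℝ ι :=
  WithLp.toLp 2 fun i => (⌊n * v i⌋ : ℝ) / n

theorem abs_sub_gridFloor_le {n : ℕ} (hn : 0 < n) (v : EuclideanSpace ℝ ι) (i : ι) :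
    |v i - gridFloor n v i| ≤ 1 / n := by
  have hn' : (0 : ℝ) < n := Nat.cast_pos.2 hn
  have hfract : v i - gridFloor n v i = Int.fract (n * v i) / n := by
    simp only [gridFloor, Int.fract]
    field_simp
  rw [hfract, abs_of_nonneg (div_nonneg (Int.fract_nonneg _) hn'.le)]
  gcongr
  exact (Int.fract_lt_one _).le

theorem gridFloor_mem_cube {d : ℕ} (n : ℕ) {v : EuclideanSpace ℝ (Fin d)} (hv : v ∈ cube d) :
    gridFloor n v ∈ cube d := fun i => by
  have hn : (0 : ℝ) ≤ n := n.cast_nonneg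
  refine ⟨div_nonneg (Int.cast_nonneg (Int.floor_nonneg.2 (mul_nonneg hn (hv i).1))) hn,
    div_le_one_of_le₀ ((Int.floor_le _).trans ?_) hn⟩
  exact mul_le_of_le_one_right hn (hv i).2

theorem coe_image_gridFloor_subset_cube {d : ℕ} (n : ℕ) {V : Finset (EuclideanSpace ℝ (Fin d))}
    (hVcube : ↑V ⊆ cube d) : ↑(V.image (gridFloor n)) ⊆ cube d := by
  rw [Finset.coe_image, Set.image_subset_iff]
  exact fun v hv => gridFloor_mem_cube n (hVcube hv)

theorem convexHull_image_gridFloor_mem_gridPolytopes {d r : ℕ} (n : ℕ)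
    {V : Finset (EuclideanSpace ℝ (Fin d))} (hVcard : V.card ≤ r) (hVcube : ↑V ⊆ cube d) :
    convexHull ℝ ↑(V.image (gridFloor n)) ∈ gridPolytopes d r n := by
  refine ⟨V.image (gridFloor n), Finset.card_image_le.trans hVcard,
    coe_image_gridFloor_subset_cube n hVcube, ?_, rfl⟩
  · simp only [Finset.forall_mem_image]
    exact fun v _ i => ⟨⌊n * v i⌋, rfl⟩

end Grid

theorem two_div_sqrt_pow_le_unitBallVol {d : ℕ} (hd : 1 ≤ d) :
    (2 / √d) ^ d ≤ unitBallVol d := by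
  have hd' : (0 : ℝ) < d := by exact_mod_cast hd
  set s := 1 / √d
  have hs : 0 < s := by positivity
  have hbox : {u : EuclideanSpace ℝ (Fin d) | ∀ i, u i ∈ Icc (-s) s}
      ⊆ Metric.closedBall 0 1 := fun u hu => by
    rw [mem_closedBall_zero_iff, EuclideanSpace.norm_eq, Real.sqrt_le_one]
    calc ∑ i, ‖u i‖ ^ 2 ≤ ∑ _i : Fin d, s ^ 2 := Finset.sum_le_sum fun i _ => by
          rw [Real.norm_eq_abs, sq_abs]
          exact sq_le_sq' (hu i).1 (hu i).2
      _ = 1 := by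
          simp [s, Real.sq_sqrt hd'.le, hd'.ne']
  calc (2 / √d) ^ d
      = (volume {u : EuclideanSpace ℝ (Fin d) | ∀ i, u i ∈ Icc (-s) s}).toReal := by
        rw [EuclideanSpace.volume_box, ENNReal.toReal_pow, ENNReal.toReal_ofReal (by linarith),
          Fintype.card_fin]
        ring
    _ ≤ unitBallVol d := ENNReal.toReal_mono measure_closedBall_lt_top.ne (measure_mono hbox)

theorem four_pow_le_unitBallVol {d : ℕ} (hd : 2 ≤ d) :
    (4 : ℝ) ^ d ≤ 2 * d ^ d * (3 / 2) ^ d * unitBallVol d := by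
  have hd' : (2 : ℝ) ≤ d := by exact_mod_cast hd
  have hsqrt : 4 ≤ 3 * √d := by
    have : 4 / 3 ≤ √d := Real.le_sqrt_of_sq_le (by linarith)
    linarith
  have hid : (d : ℝ) ^ d * (3 / 2) ^ d * (2 / √d) ^ d = (3 * √d) ^ d := by
    rw [← mul_pow, ← mul_pow]
    congr 1
    field_simp
    rw [Real.sq_sqrt (by linarith)]
  calc (4 : ℝ) ^ d ≤ (3 * √d) ^ d := by gcongr
    _ ≤ 2 * (3 * √d) ^ d := le_mul_of_one_le_left (by positivity) one_le_two
    _ = 2 * (d ^ d * (3 / 2) ^ d * (2 / √d) ^ d) := by rw [hid]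
    _ ≤ 2 * d ^ d * (3 / 2) ^ d * unitBallVol d := by
      rw [← mul_assoc, ← mul_assoc]
      gcongr
      exact two_div_sqrt_pow_le_unitBallVol (by omega)

theorem grid_polytope_approx_general (d n r : ℕ) (hd : 2 ≤ d) (hn : 0 < n)
    (P : Set (EuclideanSpace ℝ (Fin d))) (hP : P ∈ polytopes d r) :
    ∃ Pstar ∈ gridPolytopes d r n,
      sdVol Pstar P ≤ 2 * (d:ℝ)^(d+1) * (3/2)^d * unitBallVol d / n := by
  obtain ⟨V, hVcard, hVcube, rfl⟩ := hP
  refine ⟨_, convexHull_image_gridFloor_mem_gridPolytopes n hVcard hVcube, ?_⟩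
  have hcube : cube d ⊆ {u | ∀ i, u i ∈ Icc (-1) 1} := fun u hu i =>
    ⟨by linarith [(hu i).1], (hu i).2⟩
  have hvol := volume_symmDiff_convexHull_le (hVcube.trans hcube)
    ((coe_image_gridFloor_subset_cube n hVcube).trans hcube) (by positivity)
    (div_le_one_of_le₀ (Nat.one_le_cast.2 hn) (by positivity))
    (fun v hv => ⟨gridFloor n v, Finset.mem_image_of_mem _ hv, abs_sub_gridFloor_le hn v⟩)
    (Finset.forall_mem_image.2 fun v hv =>
      ⟨v, hv, fun i => abs_sub_comm (v i) _ ▸ abs_sub_gridFloor_le hn v i⟩)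
  rw [Fintype.card_fin] at hvol
  refine (ENNReal.toReal_le_of_le_ofReal (by positivity) hvol).trans ?_
  calc 4 * (d : ℝ) * (1 / n) * (4 * 1) ^ (d - 1) = d * 4 ^ d / n := by
        rw [← mul_pow_sub_one (by omega : d ≠ 0) (4 : ℝ)]
        ring
    _ ≤ d * (2 * d ^ d * (3 / 2) ^ d * unitBallVol d) / n := by
        gcongr
        exact four_pow_le_unitBallVol hd
    _ = 2 * (d : ℝ) ^ (d + 1) * (3 / 2) ^ d * unitBallVol d / n := by ring

/-- **Lemma 1** : any polytope of `𝒫_r` is approximated within `2 d^{d+1} (3/2)^d β_d / n`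
in Nikodym distance by a polytope of `𝒫_r^{(n)}`. -/
theorem grid_polytope_approx (d n r : ℕ) (hd : 2 ≤ d) (hn : 0 < n) (hr : 0 < r)
    (hrn : r ≤ n)
    (P : Set (EuclideanSpace ℝ (Fin d))) (hP : P ∈ polytopes d r) :
    ∃ Pstar ∈ gridPolytopes d r n,
      sdVol Pstar P ≤ 2 * (d:ℝ)^(d+1) * (3/2)^d * unitBallVol d / n :=
  grid_polytope_approx_general d n r hd hn P hP
end
end

section
/- Let d ≥ 2 and let R ⊆ ℝ^d be a nonempty polytope, i.e. the convex hull of a nonempty finite set of points. Then there exist nonnegative real numbers L₀, L₁, …, L_d with L₀ = |R| and L_d = β_d such that for every λ ≥ 0, the Lebesgue measure of the λ-dilation R^λ = {x ∈ ℝ^d : dist(x,R) ≤ λ} (equivalently R + λB_d(0,1)) equals ∑_{k=0}^d L_k λ^k. -/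
open MeasureTheory Set Real Pointwise ProbabilityTheory

noncomputable section

/-!
A point `x` of `R + λB` outside `R` is `p + u`, where `p` is its nearest point in `R` and
`u = x - p ≠ 0` has length at most `λ`; `u` is an outer normal of `R` at `p`, so `p` lies in the
face `conv S` spanned by the vertices `S` at which `⟪u, ·⟫` is maximal, and `u` lies in the normal
cone `N_S` of that face. Since `p` and then `u` are determined by `x`, this splits `R + λB \ R` into
the disjoint pieces `conv S + (N_S \ {0}) ∩ λB`. The normal cone is orthogonal to the affine hull
of `conv S`, so dilating the normal part by `λ` multiplies the volume of a piece by `λ ^ k`, `k`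
the codimension of the face. The faces of codimension `d` are the vertices, whose normal cones
tile the unit ball: this gives `L_d = β_d`.
-/

open Module Function
open scoped RealInnerProductSpace

namespace PolytopeSteiner

lemma add_eq_image_prodEquivOfIsCompl {R E : Type*} [Ring R] [AddCommGroup E] [Module R E]
    {W W' : Submodule R E} {A C : Set E} (h : IsCompl W W') (hA : A ⊆ W) (hC : C ⊆ W') :
    A + C = W.prodEquivOfIsCompl W' h '' ((Subtype.val ⁻¹' A) ×ˢ (Subtype.val ⁻¹' C)) := by
  ext x
  simp only [mem_add, mem_image, mem_prod, mem_preimage, Prod.exists,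
    Submodule.coe_prodEquivOfIsCompl', Subtype.exists]
  constructor
  · rintro ⟨a, ha, c, hc, rfl⟩
    exact ⟨a, hA ha, c, hC hc, ⟨ha, hc⟩, rfl⟩
  · rintro ⟨a, -, c, -, ⟨ha, hc⟩, rfl⟩
    exact ⟨a, ha, c, hc, rfl⟩

section Complement

variable {E : Type*} [NormedAddCommGroup E] [NormedSpace ℝ E] [FiniteDimensional ℝ E]
  [MeasurableSpace E] [BorelSpace E] {W W' : Submodule ℝ E} {A C : Set E}

lemma measurableSet_add_of_isCompl (h : IsCompl W W') (hA : A ⊆ W) (hC : C ⊆ W')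
    (hAm : MeasurableSet A) (hCm : MeasurableSet C) : MeasurableSet (A + C) := by
  rw [add_eq_image_prodEquivOfIsCompl h hA hC]
  let e := (W.prodEquivOfIsCompl W' h).toContinuousLinearEquiv.toHomeomorph.toMeasurableEquiv
  exact e.measurableSet_image.2
    ((measurable_subtype_coe hAm).prod (measurable_subtype_coe hCm))

lemma addHaar_add_smul_of_isCompl (μ : Measure E) [μ.IsAddHaarMeasure] (h : IsCompl W W')
    (hA : A ⊆ W) (hC : C ⊆ W') (r : ℝ) :
    μ (A + r • C) = ENNReal.ofReal (|r| ^ finrank ℝ W') * μ (A + C) := by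
  let e := W.prodEquivOfIsCompl W' h
  let T : E →ₗ[ℝ] E := (e : W × W' →ₗ[ℝ] E) ∘ₗ (LinearMap.id.prodMap (r • LinearMap.id)) ∘ₗ
    (e.symm : E →ₗ[ℝ] W × W')
  have hT : ∀ a ∈ W, ∀ c ∈ W', T (a + c) = a + r • c := by
    intro a ha c hc
    have : a + c = e (⟨a, ha⟩, ⟨c, hc⟩) := rfl
    rw [this]
    change e (LinearMap.id.prodMap (r • LinearMap.id) (e.symm (e _))) = _
    rw [LinearEquiv.symm_apply_apply]
    simp [e, Submodule.coe_prodEquivOfIsCompl']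
  have hdet : LinearMap.det T = r ^ finrank ℝ W' := by
    simp [T, LinearMap.det_prodMap]
  have himage : T '' (A + C) = A + r • C := by
    rw [Set.image_add, ← Set.image_smul]
    congr 1
    · conv_rhs => rw [← Set.image_id A]
      refine Set.image_congr fun a ha => ?_
      simpa using hT a (hA ha) 0 W'.zero_mem
    · refine Set.image_congr fun c hc => ?_
      simpa using hT 0 W.zero_mem c (hC hc)
  rw [← himage, Measure.addHaar_image_linearMap, hdet, abs_pow]

end Complement

section InnerProductSpace

variable {E : Type*} [NormedAddCommGroup E] [InnerProductSpace ℝ E]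

open Classical in
def exposedVertices (V : Finset E) (u : E) : Finset E :=
  V.filter fun v => ∀ w ∈ V, ⟪u, w⟫ ≤ ⟪u, v⟫

-- Empty unless `S` is the vertex set of an exposed face of `conv V`, so sums over all `S ⊆ V`
-- below only pick up faces.
def normalCone (V S : Finset E) : Set E := {u | exposedVertices V u = S}

def normalShell (V S : Finset E) (r : ℝ) : Set E :=
  (normalCone V S \ {0}) ∩ Metric.closedBall 0 r

def facePiece (V S : Finset E) (r : ℝ) : Set E :=
  convexHull ℝ (S : Set E) + normalShell V S r

def faceCodim (S : Finset E) : ℕ := finrank ℝ (vectorSpan ℝ (S : Set E))ᗮ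

variable {V S : Finset E} {u : E}

lemma mem_exposedVertices {v : E} :
    v ∈ exposedVertices V u ↔ v ∈ V ∧ ∀ w ∈ V, ⟪u, w⟫ ≤ ⟪u, v⟫ := by
  classical
  simp [exposedVertices]

lemma exposedVertices_subset : exposedVertices V u ⊆ V := fun _ hv =>
  (mem_exposedVertices.1 hv).1

lemma exposedVertices_nonempty (hV : V.Nonempty) : (exposedVertices V u).Nonempty := by
  obtain ⟨v, hv, hmax⟩ := V.exists_max_image (fun v => ⟪u, v⟫) hV
  exact ⟨v, mem_exposedVertices.2 ⟨hv, hmax⟩⟩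

lemma exposedVertices_smul {c : ℝ} (hc : 0 < c) :
    exposedVertices V (c • u) = exposedVertices V u := by
  ext v
  simp only [mem_exposedVertices, real_inner_smul_left, mul_le_mul_iff_right₀ hc]

lemma normalCone_eq_empty (hV : V.Nonempty) : normalCone V ∅ = ∅ :=
  eq_empty_of_forall_notMem fun _ hu => (exposedVertices_nonempty hV).ne_empty hu

lemma smul_mem_normalCone (hu : u ∈ normalCone V S) {c : ℝ} (hc : 0 < c) :
    c • u ∈ normalCone V S :=
  (exposedVertices_smul hc).trans hu

lemma subset_of_mem_normalCone (hu : u ∈ normalCone V S) : S ⊆ V :=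
  hu ▸ exposedVertices_subset

lemma normalShell_eq_smul {r : ℝ} (hr : 0 < r) : normalShell V S r = r • normalShell V S 1 := by
  ext x
  rw [mem_smul_set_iff_inv_smul_mem₀ hr.ne']
  simp only [normalShell, mem_inter_iff, mem_sdiff, mem_singleton_iff, mem_closedBall_zero_iff,
    norm_smul, norm_inv, Real.norm_of_nonneg hr.le, smul_eq_zero, inv_eq_zero, hr.ne', false_or,
    inv_mul_le_one₀ hr]
  refine and_congr_left' (and_congr_left' ⟨fun hx => smul_mem_normalCone hx (inv_pos.2 hr),
    fun hx => ?_⟩)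
  simpa [smul_smul, hr.ne'] using smul_mem_normalCone hx hr

lemma inner_le_of_mem_convexHull {s : Set E} {M : ℝ} (h : ∀ v ∈ s, ⟪u, v⟫ ≤ M) {p : E}
    (hp : p ∈ convexHull ℝ s) : ⟪u, p⟫ ≤ M :=
  convexHull_min h (convex_halfSpace_le (innerₛₗ ℝ u).isLinear M) hp

lemma le_inner_of_mem_convexHull {s : Set E} {M : ℝ} (h : ∀ v ∈ s, M ≤ ⟪u, v⟫) {p : E}
    (hp : p ∈ convexHull ℝ s) : M ≤ ⟪u, p⟫ :=
  convexHull_min h (convex_halfSpace_ge (innerₛₗ ℝ u).isLinear M) hp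

lemma inner_sub_nonpos_of_mem_normalCone (hu : u ∈ normalCone V S) {p q : E}
    (hp : p ∈ convexHull ℝ (S : Set E)) (hq : q ∈ convexHull ℝ (V : Set E)) : ⟪u, q - p⟫ ≤ 0 := by
  obtain ⟨v₀, hv₀⟩ : S.Nonempty := by simpa using convexHull_nonempty_iff.1 ⟨p, hp⟩
  rw [← show exposedVertices V u = S from hu] at hp hv₀
  have hmax := (mem_exposedVertices.1 hv₀).2
  have hq' : ⟪u, q⟫ ≤ ⟪u, v₀⟫ := inner_le_of_mem_convexHull hmax hq
  have hp' : ⟪u, v₀⟫ ≤ ⟪u, p⟫ := le_inner_of_mem_convexHull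
    (fun v hv => (mem_exposedVertices.1 hv).2 v₀ (mem_exposedVertices.1 hv₀).1) hp
  rw [inner_sub_right]
  linarith

lemma normalCone_subset_orthogonal : normalCone V S ⊆ (vectorSpan ℝ (S : Set E))ᗮ := by
  intro u hu
  have hS : vectorSpan ℝ (S : Set E) ≤ (ℝ ∙ u)ᗮ := by
    refine Submodule.span_le.2 ?_
    rintro _ ⟨a, ha, b, hb, rfl⟩
    rw [← show exposedVertices V u = S from hu, Finset.mem_coe] at ha hb
    have hab := (mem_exposedVertices.1 ha).2 b (mem_exposedVertices.1 hb).1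
    have hba := (mem_exposedVertices.1 hb).2 a (mem_exposedVertices.1 ha).1
    rw [SetLike.mem_coe, Submodule.mem_orthogonal_singleton_iff_inner_right]
    change ⟪u, a - b⟫ = 0
    rw [inner_sub_right]
    linarith
  rw [SetLike.mem_coe, Submodule.mem_orthogonal]
  intro x hx
  rw [real_inner_comm]
  exact Submodule.mem_orthogonal_singleton_iff_inner_right.1 (hS hx)

lemma normalShell_subset_orthogonal (r : ℝ) :
    normalShell V S r ⊆ (vectorSpan ℝ (S : Set E))ᗮ :=
  fun _ hu => normalCone_subset_orthogonal hu.1.1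

lemma neg_vadd_convexHull_subset_vectorSpan {p₀ : E} (hp₀ : p₀ ∈ S) :
    -p₀ +ᵥ convexHull ℝ (S : Set E) ⊆ vectorSpan ℝ (S : Set E) := by
  rintro _ ⟨p, hp, rfl⟩
  rw [← direction_affineSpan, SetLike.mem_coe]
  change -p₀ + p ∈ _
  rw [neg_add_eq_sub]
  exact AffineSubspace.vsub_mem_direction (convexHull_subset_affineSpan _ hp)
    (subset_affineSpan ℝ _ hp₀)

lemma facePiece_eq_vadd (p₀ : E) (r : ℝ) :
    facePiece V S r = p₀ +ᵥ ((-p₀ +ᵥ convexHull ℝ (S : Set E)) + normalShell V S r) := by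
  rw [← vadd_add_assoc, vadd_vadd, add_neg_cancel, zero_vadd, facePiece]

lemma eq_of_inner_sub_nonpos {x p q : E} (hp : ⟪x - p, q - p⟫ ≤ 0) (hq : ⟪x - q, p - q⟫ ≤ 0) :
    p = q := by
  have h : ⟪q - p, q - p⟫ = ⟪x - p, q - p⟫ + ⟪x - q, p - q⟫ := by
    rw [← neg_sub q p, inner_neg_right, ← sub_eq_add_neg, ← inner_sub_left, sub_sub_sub_cancel_left]
  have := real_inner_self_nonpos.1 (h ▸ add_nonpos hp hq)
  exact (sub_eq_zero.1 this).symm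

lemma mem_convexHull_exposedVertices {p : E} (hp : p ∈ convexHull ℝ (V : Set E))
    (hmax : ∀ v ∈ V, ⟪u, v⟫ ≤ ⟪u, p⟫) : p ∈ convexHull ℝ (exposedVertices V u : Set E) := by
  classical
  obtain ⟨w, hw0, hw1, hwp⟩ := Finset.mem_convexHull'.1 hp
  have hsupp : ∀ v ∈ V, w v * (⟪u, p⟫ - ⟪u, v⟫) = 0 := by
    refine (Finset.sum_eq_zero_iff_of_nonneg fun v hv =>
      mul_nonneg (hw0 v hv) (sub_nonneg.2 (hmax v hv))).1 ?_
    simp only [mul_sub, Finset.sum_sub_distrib, ← Finset.sum_mul, hw1, one_mul]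
    rw [sub_eq_zero]
    conv_lhs => rw [← hwp]
    simp only [inner_sum, real_inner_smul_right]
  rw [← hwp, show ∑ v ∈ V, w v • v = V.centerMass w id from
    (Finset.centerMass_eq_of_sum_1 V id hw1).symm, ← Finset.centerMass_filter_ne_zero]
  refine Finset.centerMass_mem_convexHull _ (fun v hv => hw0 v (Finset.mem_filter.1 hv).1)
    (by rw [Finset.sum_filter_ne_zero, hw1]; exact one_pos) fun v hv => ?_
  obtain ⟨hvV, hwv⟩ := Finset.mem_filter.1 hv
  have hpv : ⟪u, p⟫ = ⟪u, v⟫ := sub_eq_zero.1 ((mul_eq_zero.1 (hsupp v hvV)).resolve_left hwv)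
  exact mem_exposedVertices.2 ⟨hvV, fun w' hw' => hpv ▸ hmax w' hw'⟩

lemma facePiece_disjoint_convexHull (r : ℝ) :
    Disjoint (convexHull ℝ (V : Set E)) (facePiece V S r) := by
  rw [Set.disjoint_right]
  rintro _ ⟨p, hp, u, ⟨⟨hu, hu0⟩, -⟩, rfl⟩ hx
  have := inner_sub_nonpos_of_mem_normalCone hu hp hx
  rw [add_sub_cancel_left, real_inner_self_nonpos] at this
  exact hu0 this

lemma facePiece_pairwiseDisjoint (r : ℝ) : Pairwise (Disjoint on (facePiece V · r)) := by
  intro S S' hSS'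
  rw [onFun, Set.disjoint_left]
  rintro _ ⟨p, hp, u, ⟨⟨hu, -⟩, -⟩, rfl⟩ ⟨p', hp', u', ⟨⟨hu', -⟩, -⟩, hx : p' + u' = p + u⟩
  -- `p` and `p'` are both the nearest point of `conv V` to `p + u`
  have hpp' : p = p' := by
    refine eq_of_inner_sub_nonpos (x := p + u) ?_ ?_
    · rw [add_sub_cancel_left]
      exact inner_sub_nonpos_of_mem_normalCone hu hp
        (convexHull_mono (by simpa using subset_of_mem_normalCone hu') hp')
    · rw [← hx, add_sub_cancel_left]
      exact inner_sub_nonpos_of_mem_normalCone hu' hp'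
        (convexHull_mono (by simpa using subset_of_mem_normalCone hu) hp)
  subst hpp'
  exact hSS' ((hu.symm.trans (congrArg _ (add_left_cancel hx).symm)).trans hu')

lemma exists_mem_facePiece {x y : E} {r : ℝ} (hy : y ∈ convexHull ℝ (V : Set E))
    (hxy : ‖x - y‖ ≤ r) (hx : x ∉ convexHull ℝ (V : Set E)) :
    ∃ S ∈ V.powerset, x ∈ facePiece V S r := by
  have hK : Convex ℝ (convexHull ℝ (V : Set E)) := convex_convexHull ℝ _
  obtain ⟨p, hpK, hpmin⟩ := exists_norm_eq_iInf_of_complete_convex ⟨y, hy⟩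
    (V.finite_toSet.isCompact_convexHull ℝ).isComplete hK x
  have hproj := (norm_eq_iInf_iff_real_inner_le_zero hK hpK).1 hpmin
  have hdist : ‖x - p‖ ≤ r := hpmin ▸
    (ciInf_le ⟨0, forall_mem_range.2 fun _ => norm_nonneg _⟩ (⟨y, hy⟩ : convexHull ℝ _)).trans hxy
  refine ⟨exposedVertices V (x - p), Finset.mem_powerset.2 exposedVertices_subset, p, ?_, x - p,
    ⟨⟨rfl, sub_ne_zero.2 fun h => hx (h ▸ hpK)⟩, mem_closedBall_zero_iff.2 hdist⟩,
    add_sub_cancel p x⟩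
  refine mem_convexHull_exposedVertices hpK fun v hv => ?_
  have := hproj v (subset_convexHull ℝ _ hv)
  rw [inner_sub_right] at this
  linarith

lemma convexHull_add_closedBall {r : ℝ} (hr : 0 ≤ r) :
    convexHull ℝ (V : Set E) + Metric.closedBall 0 r =
      convexHull ℝ (V : Set E) ∪ ⋃ S ∈ V.powerset, facePiece V S r := by
  refine Subset.antisymm ?_ (union_subset ?_ (iUnion₂_subset fun S hS => ?_))
  · rintro _ ⟨y, hy, w, hw, rfl⟩
    by_cases hx : y + w ∈ convexHull ℝ (V : Set E)
    · exact Or.inl hx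
    · obtain ⟨S, hS, hxS⟩ := exists_mem_facePiece hy (by simpa using hw) hx
      exact Or.inr (mem_iUnion₂.2 ⟨S, hS, hxS⟩)
  · exact subset_add_left _ (Metric.mem_closedBall_self hr)
  · exact add_subset_add (convexHull_mono (by simpa using Finset.mem_powerset.1 hS))
      inter_subset_right

lemma measurableSet_normalCone [MeasurableSpace E] [BorelSpace E] :
    MeasurableSet (normalCone V S) := by
  classical
  have hmax : ∀ v : E, MeasurableSet {u : E | ∀ w ∈ V, ⟪u, w⟫ ≤ ⟪u, v⟫} := fun v => by
    simp only [ofPred_forall]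
    exact (isClosed_biInter fun w _ => isClosed_le (by fun_prop) (by fun_prop)).measurableSet
  have hcone : normalCone V S = ⋂ v ∈ V ∪ S, {u | v ∈ exposedVertices V u ↔ v ∈ S} := by
    ext u
    simp only [normalCone, mem_ofPred_eq, mem_iInter, Finset.ext_iff]
    refine ⟨fun h v _ => h v, fun h v => ?_⟩
    by_cases hv : v ∈ V ∪ S
    · exact h v hv
    · simp only [Finset.mem_union, not_or] at hv
      simp [mem_exposedVertices, hv.1, hv.2]
  rw [hcone]
  refine Finset.measurableSet_biInter _ fun v _ => measurableSet_setOfPred.2 ?_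
  simp only [mem_exposedVertices]
  exact (measurable_const.and (measurableSet_setOfPred.1 (hmax v))).iff measurable_const

lemma measurableSet_normalShell [MeasurableSpace E] [BorelSpace E] (r : ℝ) :
    MeasurableSet (normalShell V S r) :=
  (measurableSet_normalCone.diff (measurableSet_singleton 0)).inter measurableSet_closedBall

variable [FiniteDimensional ℝ E]

lemma normalShell_eq_empty_of_faceCodim_eq_zero (hS : faceCodim S = 0) (r : ℝ) :
    normalShell V S r = ∅ := by
  refine eq_empty_of_forall_notMem fun u hu => hu.1.2 ?_
  have := normalShell_subset_orthogonal r hu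
  rwa [Submodule.finrank_eq_zero.1 hS] at this

lemma facePiece_eq_empty_of_faceCodim_eq_zero (hS : faceCodim S = 0) (r : ℝ) :
    facePiece V S r = ∅ := by
  rw [facePiece, normalShell_eq_empty_of_faceCodim_eq_zero hS, add_empty]

variable [MeasurableSpace E] (μ : Measure E) [μ.IsAddHaarMeasure]

lemma addHaar_facePiece_lt_top : μ (facePiece V S 1) < ⊤ :=
  ((S.finite_toSet.isCompact_convexHull ℝ).isBounded.add
    (Metric.isBounded_closedBall.subset inter_subset_right)).measure_lt_top

variable [BorelSpace E]

lemma measurableSet_facePiece (r : ℝ) : MeasurableSet (facePiece V S r) := by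
  rcases S.eq_empty_or_nonempty with rfl | ⟨p₀, hp₀⟩
  · simp [facePiece]
  rw [facePiece_eq_vadd p₀]
  refine MeasurableSet.const_vadd (measurableSet_add_of_isCompl
    (vectorSpan ℝ (S : Set E)).isCompl_orthogonal (neg_vadd_convexHull_subset_vectorSpan hp₀)
    (normalShell_subset_orthogonal r) ?_ (measurableSet_normalShell r)) p₀
  rw [← convexHull_vadd]
  exact (S.finite_toSet.vadd_set.isCompact_convexHull ℝ).measurableSet

lemma addHaar_facePiece {r : ℝ} (hr : 0 ≤ r) :
    μ (facePiece V S r) = ENNReal.ofReal (r ^ faceCodim S) * μ (facePiece V S 1) := by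
  rcases hr.eq_or_lt with rfl | hr
  · have h0 : facePiece V S 0 = ∅ := by
      rw [facePiece, normalShell, Metric.closedBall_zero, sdiff_inter_self, add_empty]
    rcases eq_or_ne (faceCodim S) 0 with hS | hS
    · simp [h0, facePiece_eq_empty_of_faceCodim_eq_zero hS]
    · simp [h0, zero_pow hS]
  rcases S.eq_empty_or_nonempty with rfl | ⟨p₀, hp₀⟩
  · simp [facePiece]
  rw [facePiece_eq_vadd p₀, facePiece_eq_vadd p₀, measure_vadd, measure_vadd,
    normalShell_eq_smul hr, addHaar_add_smul_of_isCompl μ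
      (vectorSpan ℝ (S : Set E)).isCompl_orthogonal (neg_vadd_convexHull_subset_vectorSpan hp₀)
      (normalShell_subset_orthogonal 1), abs_of_pos hr, faceCodim]

lemma addHaar_convexHull_add_closedBall {r : ℝ} (hr : 0 ≤ r) :
    μ (convexHull ℝ (V : Set E) + Metric.closedBall 0 r) = μ (convexHull ℝ (V : Set E)) +
      ∑ S ∈ V.powerset, ENNReal.ofReal (r ^ faceCodim S) * μ (facePiece V S 1) := by
  rw [convexHull_add_closedBall hr, measure_union
      (disjoint_iUnion₂_right.2 fun S _ => facePiece_disjoint_convexHull (S := S) r)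
      (Finset.measurableSet_biUnion _ fun S _ => measurableSet_facePiece r),
    measure_biUnion_finset ((facePiece_pairwiseDisjoint r).set_pairwise _)
      fun S _ => measurableSet_facePiece r]
  exact congrArg _ (Finset.sum_congr rfl fun S _ => addHaar_facePiece μ hr)

lemma toReal_addHaar_convexHull_add_closedBall {r : ℝ} (hr : 0 ≤ r) :
    (μ (convexHull ℝ (V : Set E) + Metric.closedBall 0 r)).toReal =
      (μ (convexHull ℝ (V : Set E))).toReal +
        ∑ S ∈ V.powerset, (μ (facePiece V S 1)).toReal * r ^ faceCodim S := by
  have hfin : ∀ S ∈ V.powerset, ENNReal.ofReal (r ^ faceCodim S) * μ (facePiece V S 1) ≠ ⊤ :=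
    fun S _ => ENNReal.mul_ne_top ENNReal.ofReal_ne_top (addHaar_facePiece_lt_top μ).ne
  rw [addHaar_convexHull_add_closedBall μ hr, ENNReal.toReal_add
      (V.finite_toSet.isCompact_convexHull ℝ).measure_lt_top.ne
      (ENNReal.sum_ne_top.2 hfin), ENNReal.toReal_sum hfin]
  simp only [ENNReal.toReal_mul, ENNReal.toReal_ofReal (pow_nonneg hr _), mul_comm]

lemma addHaar_normalShell_eq_zero (hS : faceCodim S ≠ finrank ℝ E) (r : ℝ) :
    μ (normalShell V S r) = 0 := by
  refine measure_mono_null (normalShell_subset_orthogonal r) (Measure.addHaar_submodule μ _ ?_)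
  rintro htop
  exact hS (by rw [faceCodim, htop, finrank_top])

lemma addHaar_facePiece_eq_addHaar_normalShell (hV : V.Nonempty)
    (hS : faceCodim S = finrank ℝ E) (r : ℝ) :
    μ (facePiece V S r) = μ (normalShell V S r) := by
  have hbot : vectorSpan ℝ (S : Set E) = ⊥ := by
    have := (vectorSpan ℝ (S : Set E)).finrank_add_finrank_orthogonal
    rw [← faceCodim, hS] at this
    exact Submodule.finrank_eq_zero.1 (by omega)
  rcases ((vectorSpan_eq_bot_iff_subsingleton ℝ).1 hbot).eq_empty_or_singleton with hS | ⟨v, hS⟩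
  · rw [Finset.coe_eq_empty] at hS
    simp [facePiece, normalShell, hS, normalCone_eq_empty hV]
  · rw [facePiece, hS, convexHull_singleton, singleton_add, image_add_left, measure_preimage_add]

lemma addHaar_closedBall_eq_sum [Nontrivial E] (hV : V.Nonempty) :
    μ (Metric.closedBall 0 1) =
      ∑ S ∈ V.powerset with faceCodim S = finrank ℝ E, μ (facePiece V S 1) := by
  have hcover : Metric.closedBall (0 : E) 1 \ {0} = ⋃ S ∈ V.powerset, normalShell V S 1 := by
    ext u
    simp only [mem_sdiff, mem_iUnion, exists_prop, Finset.mem_powerset, normalShell,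
      mem_inter_iff]
    exact ⟨fun ⟨hu, hu0⟩ => ⟨_, exposedVertices_subset, ⟨rfl, hu0⟩, hu⟩,
      fun ⟨_, _, ⟨_, hu0⟩, hu⟩ => ⟨hu, hu0⟩⟩
  have hdisj : Pairwise (Disjoint on (normalShell V · 1)) := fun S S' hSS' =>
    Set.disjoint_left.2 fun _ hu hu' => hSS' (hu.1.1.symm.trans hu'.1.1)
  rw [← measure_sdiff_null (measure_singleton 0), hcover, measure_biUnion_finset
      (hdisj.set_pairwise _) fun S _ => measurableSet_normalShell 1,
    ← Finset.sum_filter_of_ne fun S _ hS =>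
      by_contra fun h => hS (addHaar_normalShell_eq_zero μ h 1)]
  exact Finset.sum_congr rfl fun S hS =>
    (addHaar_facePiece_eq_addHaar_normalShell μ hV (Finset.mem_filter.1 hS).2 1).symm

end InnerProductSpace

lemma sum_range_sum_filter_mul_pow {ι : Type*} (s : Finset ι) {g : ι → ℕ} {n : ℕ}
    (hg : ∀ i ∈ s, g i ≤ n) (f : ι → ℝ) (x : ℝ) :
    ∑ k ∈ Finset.range (n + 1), (∑ i ∈ s with g i = k, f i) * x ^ k = ∑ i ∈ s, f i * x ^ g i := by
  rw [← Finset.sum_fiberwise_of_maps_to (t := Finset.range (n + 1))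
    fun i hi => Finset.mem_range.2 (Nat.lt_succ_of_le (hg i hi))]
  refine Finset.sum_congr rfl fun k _ => ?_
  rw [Finset.sum_mul]
  exact Finset.sum_congr rfl fun i hi => by rw [(Finset.mem_filter.1 hi).2]

end PolytopeSteiner

open PolytopeSteiner in
/-- **Lemma 5** (Steiner formula for polytopes) : the volume of the `λ`-dilation
`R + λ B_d(0,1)` of a nonempty polytope `R` is a polynomial of degree `d` in `λ ≥ 0`,
with nonnegative coefficients, constant coefficient `|R|` and leading coefficient `β_d`. -/
theorem steiner_formula_polytope (d : ℕ) (hd : 2 ≤ d)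
    (V : Finset (EuclideanSpace ℝ (Fin d))) (hV : V.Nonempty)
    (R : Set (EuclideanSpace ℝ (Fin d)))
    (hR : R = convexHull ℝ (V : Set (EuclideanSpace ℝ (Fin d)))) :
    ∃ L : ℕ → ℝ, (∀ k, k ≤ d → 0 ≤ L k) ∧
      L 0 = (volume R).toReal ∧ L d = unitBallVol d ∧
      ∀ lam : ℝ, 0 ≤ lam →
        (volume (R + lam • Metric.closedBall (0 : EuclideanSpace ℝ (Fin d)) 1)).toReal
          = ∑ k ∈ Finset.range (d + 1), L k * lam ^ k := by
  have : Nonempty (Fin d) := ⟨⟨0, by omega⟩⟩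
  let t : Finset (EuclideanSpace ℝ (Fin d)) → ℝ := fun S => (volume (facePiece V S 1)).toReal
  refine ⟨fun k => (if k = 0 then (volume R).toReal else 0) +
    ∑ S ∈ V.powerset with faceCodim S = k, t S, fun k _ => ?_, ?_, ?_, fun lam hlam => ?_⟩
  · exact add_nonneg (by split_ifs <;> positivity) (Finset.sum_nonneg fun S _ => by positivity)
  · beta_reduce
    rw [if_pos rfl, Finset.sum_eq_zero fun S hS => by
      simp [t, facePiece_eq_empty_of_faceCodim_eq_zero (Finset.mem_filter.1 hS).2], add_zero]
  · beta_reduce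
    rw [if_neg (by omega), zero_add, unitBallVol, addHaar_closedBall_eq_sum volume hV,
      finrank_euclideanSpace_fin, ENNReal.toReal_sum fun S _ => (addHaar_facePiece_lt_top _).ne]
  · rw [smul_unitClosedBall_of_nonneg hlam, hR,
      toReal_addHaar_convexHull_add_closedBall volume hlam]
    simp only [add_mul, Finset.sum_add_distrib, ite_mul, zero_mul, Finset.sum_ite_eq',
      Finset.mem_range, Nat.zero_lt_succ, if_true, pow_zero, mul_one]
    rw [sum_range_sum_filter_mul_pow _ fun S _ => ?_]
    exact (Submodule.finrank_le _).trans finrank_euclideanSpace_fin.le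
end
end

section
/- Let d ≥ 2, let a ∈ ℝ^d and u > 0, and let R ⊆ B_d(a,u) be a nonempty polytope (the convex hull of a nonempty finite set of points). Then there exist nonnegative real numbers L₀, L₁, …, L_d such that |R + λB_d(0,1)| = ∑_{k=0}^d L_k λ^k for all λ ≥ 0, and moreover L_k ≤ (u+1)^d β_d for every k ∈ {0,…,d}. -/
open MeasureTheory Set Real Pointwise ProbabilityTheory

noncomputable section

/-!
Every point `x` of `P + r • B`, with `P = conv V`, has a nearest point `p ∈ P`. For `u = x - p`,
the vertices `S ⊆ V` maximising `⟪u, ·⟫` span a face containing `p`, and `u` lies in the normal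
cone of that face. Hence `P + r • B` is the disjoint union of the convex cells
`conv S + (normalCone V S ∩ closedBall 0 r)`, `S ⊆ V`. The linear map fixing the direction of
`S` and scaling its orthogonal complement by `r` carries the cell of radius `1` onto a translate
of the cell of radius `r`, so each cell has volume `r ^ codim S` times its volume at `r = 1`.
The coefficients of the resulting polynomial are nonnegative, and at `r = 1` their sum is the
volume of `P + B ⊆ B(a, u + 1)`.
-/

open Metric Module
open scoped InnerProductSpace

namespace Steiner

lemma mem_convexHull_filter_of_le {F : Type*} [AddCommGroup F] [Module ℝ F] {V : Finset F} {p : F}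
    (f : F →ₗ[ℝ] ℝ) (hp : p ∈ convexHull ℝ (V : Set F)) (hf : ∀ v ∈ V, f v ≤ f p) :
    p ∈ convexHull ℝ (V.filter fun v => f v = f p : Set F) := by
  classical
  obtain ⟨w, hw0, hw1, hpw⟩ := Finset.mem_convexHull.1 hp
  have hp_sum : p = ∑ v ∈ V, w v • v := by rw [← hpw, Finset.centerMass_eq_of_sum_1 _ _ hw1]; rfl
  have h_total : ∑ v ∈ V, w v * (f v - f p) = 0 := by
    have : ∑ v ∈ V, w v * (f v - f p) = f (∑ v ∈ V, w v • v) - (∑ v ∈ V, w v) * f p := by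
      simp [mul_sub, Finset.sum_sub_distrib, Finset.sum_mul, map_sum]
    rw [this, ← hp_sum, hw1, one_mul, sub_self]
  have h_zero : ∀ v ∈ V, v ∉ V.filter (fun v => f v = f p) → w v = 0 := by
    intro v hv hvS
    have h_term := (Finset.sum_eq_zero_iff_of_nonpos fun v hv =>
      mul_nonpos_of_nonneg_of_nonpos (hw0 v hv) (sub_nonpos.2 (hf v hv))).1 h_total v hv
    have h_ne : f v - f p ≠ 0 := sub_ne_zero.2 fun h => hvS (Finset.mem_filter.2 ⟨hv, h⟩)
    exact (mul_eq_zero.1 h_term).resolve_right h_ne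
  have h_sub : V.filter (fun v => f v = f p) ⊆ V := Finset.filter_subset _ _
  have h_pos : 0 < ∑ v ∈ V.filter (fun v => f v = f p), w v := by
    rw [Finset.sum_subset h_sub h_zero, hw1]
    exact one_pos
  have h_mem := Finset.centerMass_mem_convexHull _ (fun v hv => hw0 v (h_sub hv)) h_pos
    (z := id) fun v hv => Finset.mem_coe.2 hv
  rwa [Finset.centerMass_subset id h_sub h_zero, hpw] at h_mem

variable {E : Type*} [NormedAddCommGroup E] [InnerProductSpace ℝ E]

section Stretch

variable [FiniteDimensional ℝ E] (W : Submodule ℝ E) (t : ℝ)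

def stretch : E →ₗ[ℝ] E :=
  (W.prodEquivOfIsCompl Wᗮ W.isCompl_orthogonal).conj (LinearMap.id.prodMap (t • LinearMap.id))

lemma stretch_apply_of_mem {w : E} (hw : w ∈ W) : stretch W t w = w := by
  simp [stretch, LinearEquiv.conj_apply, Submodule.projection_apply_of_mem_left _ hw, hw]

lemma stretch_apply_of_mem_orthogonal {c : E} (hc : c ∈ Wᗮ) : stretch W t c = t • c := by
  simp [stretch, LinearEquiv.conj_apply, Submodule.projection_apply_of_mem_left _ hc, hc]

lemma det_stretch : LinearMap.det (stretch W t) = t ^ finrank ℝ Wᗮ := by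
  rw [stretch, LinearEquiv.conj_apply, LinearMap.comp_assoc, LinearMap.det_conj,
    LinearMap.det_prodMap, LinearMap.det_id, LinearMap.det_smul, LinearMap.det_id, one_mul, mul_one]

end Stretch

/-- For nonempty `S ⊆ V`: the `u` whose maximisers on `V` are exactly `S`, i.e. the relatively
open normal cone of the face `conv S`. -/
def normalCone (V S : Finset E) : Set E :=
  {u | ∀ v ∈ S, ∀ w ∈ V, ⟪u, w - v⟫_ℝ ≤ 0 ∧ (w ∉ S → ⟪u, w - v⟫_ℝ < 0)}

def steinerCell (V S : Finset E) (r : ℝ) : Set E :=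
  convexHull ℝ (S : Set E) + (normalCone V S ∩ closedBall 0 r)

def codim (S : Finset E) : ℕ := finrank ℝ (vectorSpan ℝ (S : Set E))ᗮ

variable {V S T : Finset E} {u : E}

lemma smul_mem_normalCone {c : ℝ} (hc : 0 < c) (hu : u ∈ normalCone V S) :
    c • u ∈ normalCone V S := fun v hv w hw => by
  simp only [real_inner_smul_left]
  exact ⟨mul_nonpos_of_nonneg_of_nonpos hc.le (hu v hv w hw).1,
    fun hwS => mul_neg_of_pos_of_neg hc ((hu v hv w hw).2 hwS)⟩

lemma convex_normalCone : Convex ℝ (normalCone V S) := by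
  intro u hu u' hu' a b ha hb hab v hv w hw
  simp only [inner_add_left, real_inner_smul_left]
  obtain ⟨h₁, h₁'⟩ := hu v hv w hw
  obtain ⟨h₂, h₂'⟩ := hu' v hv w hw
  refine ⟨by nlinarith, fun hwS => ?_⟩
  rcases ha.eq_or_lt with rfl | ha
  · obtain rfl : b = 1 := by linarith
    simpa using h₂' hwS
  · nlinarith [h₁' hwS, h₂' hwS]

lemma normalCone_subset_orthogonal (hSV : S ⊆ V) :
    normalCone V S ⊆ (vectorSpan ℝ (S : Set E))ᗮ := by
  intro u hu
  have : vectorSpan ℝ (S : Set E) ≤ LinearMap.ker (innerₛₗ ℝ u) := by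
    rw [vectorSpan_def, Submodule.span_le]
    rintro _ ⟨v, hv, w, hw, rfl⟩
    have h₁ := (hu w hw v (hSV hv)).1
    have h₂ := (hu v hv w (hSV hw)).1
    rw [inner_sub_right] at h₁ h₂
    simp only [SetLike.mem_coe, LinearMap.mem_ker, innerₛₗ_apply_apply, vsub_eq_sub,
      inner_sub_right]
    linarith
  exact (Submodule.mem_orthogonal' _ _).2 fun x hx => this hx

lemma inner_sub_eq_zero_of_mem_normalCone (hSV : S ⊆ V) (hu : u ∈ normalCone V S) {p q : E}
    (hp : p ∈ convexHull ℝ (S : Set E)) (hq : q ∈ convexHull ℝ (S : Set E)) :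
    ⟪u, q - p⟫_ℝ = 0 :=
  (Submodule.mem_orthogonal' _ _).1 (normalCone_subset_orthogonal hSV hu) _
    (vsub_mem_vectorSpan_of_mem_affineSpan_of_mem_affineSpan (convexHull_subset_affineSpan _ hq)
      (convexHull_subset_affineSpan _ hp))

lemma inner_sub_nonpos_of_mem_normalCone (hSV : S ⊆ V) (hu : u ∈ normalCone V S) {p y : E}
    (hp : p ∈ convexHull ℝ (S : Set E)) (hy : y ∈ convexHull ℝ (V : Set E)) :
    ⟪u, y - p⟫_ℝ ≤ 0 := by
  obtain ⟨v, hv⟩ := convexHull_nonempty_iff.1 ⟨p, hp⟩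
  have hyv : ⟪u, y⟫_ℝ ≤ ⟪u, v⟫_ℝ := by
    refine convexHull_min (fun w hw => ?_) (convex_halfSpace_le (innerₛₗ ℝ u).isLinear _) hy
    have := (hu v hv w hw).1
    rw [inner_sub_right] at this
    simpa using this
  have hvp := inner_sub_eq_zero_of_mem_normalCone hSV hu hp (subset_convexHull ℝ _ hv)
  rw [inner_sub_right] at hvp ⊢
  linarith

lemma eq_filter_of_mem_normalCone (hSV : S ⊆ V) (hu : u ∈ normalCone V S) {p : E}
    (hp : p ∈ convexHull ℝ (S : Set E)) : S = V.filter fun w => ⟪u, w⟫_ℝ = ⟪u, p⟫_ℝ := by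
  have h_face : ∀ w ∈ S, ⟪u, w⟫_ℝ = ⟪u, p⟫_ℝ := fun w hw => by
    have := inner_sub_eq_zero_of_mem_normalCone hSV hu hp (subset_convexHull ℝ _ hw)
    rwa [inner_sub_right, sub_eq_zero] at this
  ext w
  refine ⟨fun hw => Finset.mem_filter.2 ⟨hSV hw, h_face w hw⟩, fun hw => ?_⟩
  obtain ⟨hwV, hwp⟩ := Finset.mem_filter.1 hw
  obtain ⟨v, hv⟩ := convexHull_nonempty_iff.1 ⟨p, hp⟩
  by_contra hwS
  have := (hu v hv w hwV).2 hwS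
  rw [inner_sub_right, hwp, ← h_face v hv, sub_self] at this
  exact lt_irrefl _ this

lemma eq_of_inner_sub_nonpos {x p q : E} (hp : ⟪x - p, q - p⟫_ℝ ≤ 0)
    (hq : ⟪x - q, p - q⟫_ℝ ≤ 0) : p = q := by
  have h : ⟪x - p, q - p⟫_ℝ + ⟪x - q, p - q⟫_ℝ = ‖q - p‖ ^ 2 := by
    rw [← neg_sub q p, inner_neg_right, ← sub_eq_add_neg, ← inner_sub_left,
      sub_sub_sub_cancel_left, real_inner_self_eq_norm_sq]
  have : ‖q - p‖ ^ 2 = 0 := le_antisymm (by linarith) (sq_nonneg _)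
  simpa [sub_eq_zero, eq_comm] using this

lemma disjoint_steinerCell (hSV : S ⊆ V) (hTV : T ⊆ V) (hST : S ≠ T) (r : ℝ) :
    Disjoint (steinerCell V S r) (steinerCell V T r) := by
  rw [Set.disjoint_left]
  rintro _ ⟨p, hp, u, ⟨hu, -⟩, rfl⟩ ⟨q, hq, w, ⟨hw, -⟩, hx : q + w = p + u⟩
  have hpq : p = q := by
    refine eq_of_inner_sub_nonpos (x := p + u) ?_ ?_
    · rw [add_sub_cancel_left]
      exact inner_sub_nonpos_of_mem_normalCone hSV hu hp (convexHull_mono hTV hq)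
    · rw [← hx, add_sub_cancel_left]
      exact inner_sub_nonpos_of_mem_normalCone hTV hw hq (convexHull_mono hSV hp)
  subst hpq
  obtain rfl : w = u := add_left_cancel hx
  exact hST ((eq_filter_of_mem_normalCone hSV hu hp).trans
    (eq_filter_of_mem_normalCone hTV hw hq).symm)

lemma steinerCell_subset (hSV : S ⊆ V) (r : ℝ) :
    steinerCell V S r ⊆ convexHull ℝ (V : Set E) + closedBall 0 r :=
  Set.add_subset_add (convexHull_mono hSV) Set.inter_subset_right

lemma subset_iUnion_steinerCell (V : Finset E) (r : ℝ) :
    convexHull ℝ (V : Set E) + closedBall 0 r ⊆ ⋃ S ∈ V.powerset, steinerCell V S r := by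
  classical
  rintro _ ⟨y, hy, b, hb, rfl⟩
  have hconv := convex_convexHull ℝ (V : Set E)
  obtain ⟨p, hp, hmin⟩ := exists_norm_eq_iInf_of_complete_convex ⟨y, hy⟩
    (V.finite_toSet.isCompact_convexHull ℝ).isComplete hconv (y + b)
  set u := y + b - p
  have h_le : ∀ w ∈ V, ⟪u, w⟫_ℝ ≤ ⟪u, p⟫_ℝ := fun w hw => by
    have := (norm_eq_iInf_iff_real_inner_le_zero hconv hp).1 hmin w (subset_convexHull ℝ _ hw)
    rw [inner_sub_right] at this
    linarith
  set S := V.filter fun w => ⟪u, w⟫_ℝ = ⟪u, p⟫_ℝ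
  have hpS : p ∈ convexHull ℝ (S : Set E) := mem_convexHull_filter_of_le (innerₛₗ ℝ u) hp h_le
  have huN : u ∈ normalCone V S := fun v hv w hw => by
    rw [inner_sub_right, (Finset.mem_filter.1 hv).2]
    exact ⟨sub_nonpos.2 (h_le w hw), fun hwS => sub_neg.2 ((h_le w hw).lt_of_ne fun h =>
      hwS (Finset.mem_filter.2 ⟨hw, h⟩))⟩
  have hur : ‖u‖ ≤ r :=
    calc ‖u‖ ≤ ‖y + b - y‖ := hmin ▸ ciInf_le ⟨0, Set.forall_mem_range.2 fun _ => norm_nonneg _⟩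
          (⟨y, hy⟩ : convexHull ℝ (V : Set E))
      _ = ‖b‖ := by rw [add_sub_cancel_left]
      _ ≤ r := mem_closedBall_zero_iff.1 hb
  exact Set.mem_biUnion (Finset.mem_powerset.2 (Finset.filter_subset _ _))
    ⟨p, hpS, u, ⟨huN, mem_closedBall_zero_iff.2 hur⟩, add_sub_cancel p _⟩

lemma iUnion_steinerCell (V : Finset E) (r : ℝ) :
    ⋃ S ∈ V.powerset, steinerCell V S r = convexHull ℝ (V : Set E) + closedBall 0 r :=
  (Set.iUnion₂_subset fun _ hS => steinerCell_subset (Finset.mem_powerset.1 hS) r).antisymm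
    (subset_iUnion_steinerCell V r)

lemma smul_normalCone {t : ℝ} (ht : 0 < t) : t • normalCone V S = normalCone V S := by
  ext u
  rw [Set.mem_smul_set_iff_inv_smul_mem₀ ht.ne']
  refine ⟨fun hu => ?_, smul_mem_normalCone (inv_pos.2 ht)⟩
  simpa [smul_smul, ht.ne'] using smul_mem_normalCone ht hu

lemma convex_steinerCell (r : ℝ) : Convex ℝ (steinerCell V S r) :=
  (convex_convexHull ℝ _).add (convex_normalCone.inter (convex_closedBall 0 r))

section Measure

variable [FiniteDimensional ℝ E]

lemma image_stretch_steinerCell (hSV : S ⊆ V) {t : ℝ} (ht : 0 < t) {s : E} (hs : s ∈ S) :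
    stretch (vectorSpan ℝ (S : Set E)) t '' steinerCell V S 1 =
      (stretch (vectorSpan ℝ (S : Set E)) t s - s) +ᵥ steinerCell V S t := by
  set T := stretch (vectorSpan ℝ (S : Set E)) t
  have h_hull : T '' convexHull ℝ (S : Set E) = (T s - s) +ᵥ convexHull ℝ (S : Set E) := by
    rw [← Set.image_vadd]
    refine Set.image_congr fun p hp => ?_
    have hps : p - s ∈ vectorSpan ℝ (S : Set E) :=
      vsub_mem_vectorSpan_of_mem_affineSpan_of_mem_affineSpan (convexHull_subset_affineSpan _ hp)
        (subset_affineSpan ℝ _ hs)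
    rw [← sub_add_cancel p s, map_add, stretch_apply_of_mem _ _ hps, vadd_eq_add]
    abel
  have h_cone : T '' (normalCone V S ∩ closedBall 0 1) = normalCone V S ∩ closedBall 0 t := by
    calc T '' (normalCone V S ∩ closedBall 0 1) = t • (normalCone V S ∩ closedBall 0 1) := by
          rw [← Set.image_smul]
          exact Set.image_congr fun c hc =>
            stretch_apply_of_mem_orthogonal _ _ (normalCone_subset_orthogonal hSV hc.1)
      _ = normalCone V S ∩ closedBall 0 t := by
          rw [Set.smul_set_inter₀ ht.ne', smul_normalCone ht, smul_unitClosedBall_of_nonneg ht.le]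
  rw [steinerCell, Set.image_add, h_hull, h_cone, steinerCell, vadd_add_assoc]

lemma measure_steinerCell_ne_top [MeasurableSpace E] (μ : Measure E) [IsFiniteMeasureOnCompacts μ]
    (hSV : S ⊆ V) : μ (steinerCell V S 1) ≠ ⊤ :=
  ne_top_of_le_ne_top (((V.finite_toSet.isCompact_convexHull ℝ).add
    (isCompact_closedBall 0 1)).measure_lt_top).ne (measure_mono (steinerCell_subset hSV 1))

variable [MeasurableSpace E] [BorelSpace E] (μ : Measure E) [μ.IsAddHaarMeasure]

lemma measure_steinerCell_of_pos (hSV : S ⊆ V) {t : ℝ} (ht : 0 < t) :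
    μ (steinerCell V S t) = ENNReal.ofReal (t ^ codim S) * μ (steinerCell V S 1) := by
  rcases S.eq_empty_or_nonempty with rfl | ⟨s, hs⟩
  · simp [steinerCell]
  calc μ (steinerCell V S t)
      = μ ((stretch (vectorSpan ℝ (S : Set E)) t s - s) +ᵥ steinerCell V S t) :=
        (measure_vadd μ _ _).symm
    _ = μ (stretch (vectorSpan ℝ (S : Set E)) t '' steinerCell V S 1) := by
        rw [image_stretch_steinerCell hSV ht hs]
    _ = ENNReal.ofReal (t ^ codim S) * μ (steinerCell V S 1) := by
        rw [Measure.addHaar_image_linearMap, det_stretch, abs_of_nonneg (by positivity), codim]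

lemma measure_steinerCell_zero (hSV : S ⊆ V) :
    μ (steinerCell V S 0) = ENNReal.ofReal (0 ^ codim S) * μ (steinerCell V S 1) := by
  rcases (codim S).eq_zero_or_pos with h | h
  · have h_bot : (vectorSpan ℝ (S : Set E))ᗮ = ⊥ := Submodule.finrank_eq_zero.1 h
    have h_cone : ∀ r : ℝ, 0 ≤ r → normalCone V S ∩ closedBall 0 r = normalCone V S := fun r hr =>
      Set.inter_eq_left.2 fun u hu => by
        have := normalCone_subset_orthogonal hSV hu
        rw [h_bot, SetLike.mem_coe, Submodule.mem_bot] at this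
        simpa [this] using hr
    rw [h, pow_zero, ENNReal.ofReal_one, one_mul, steinerCell, steinerCell, h_cone 0 le_rfl,
      h_cone 1 zero_le_one]
  · rw [zero_pow h.ne', ENNReal.ofReal_zero, zero_mul]
    have h_top : affineSpan ℝ (S : Set E) ≠ ⊤ := fun h_top => by
      have h_dir := congrArg AffineSubspace.direction h_top
      rw [direction_affineSpan, AffineSubspace.direction_top,
        ← Submodule.orthogonal_eq_bot_iff] at h_dir
      rw [codim, h_dir, finrank_bot] at h
      exact lt_irrefl _ h
    refine measure_mono_null (fun x hx => ?_) (Measure.addHaar_affineSubspace μ _ h_top)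
    obtain ⟨p, hp, c, ⟨-, hc⟩, rfl⟩ := hx
    rw [closedBall_zero, Set.mem_singleton_iff] at hc
    simpa [hc] using convexHull_subset_affineSpan _ hp

lemma measure_steinerCell (hSV : S ⊆ V) {t : ℝ} (ht : 0 ≤ t) :
    μ (steinerCell V S t) = ENNReal.ofReal (t ^ codim S) * μ (steinerCell V S 1) := by
  rcases ht.lt_or_eq with ht | rfl
  · exact measure_steinerCell_of_pos μ hSV ht
  · exact measure_steinerCell_zero μ hSV

lemma measure_convexHull_add_closedBall (V : Finset E) {r : ℝ} (hr : 0 ≤ r) :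
    μ (convexHull ℝ (V : Set E) + closedBall 0 r) =
      ∑ S ∈ V.powerset, ENNReal.ofReal (r ^ codim S) * μ (steinerCell V S 1) := by
  rw [← iUnion_steinerCell, measure_biUnion_finset₀
    (fun S hS T hT hST => (disjoint_steinerCell (Finset.mem_powerset.1 hS)
      (Finset.mem_powerset.1 hT) hST r).aedisjoint)
    fun S _ => (convex_steinerCell r).nullMeasurableSet μ]
  exact Finset.sum_congr rfl fun S hS => measure_steinerCell μ (Finset.mem_powerset.1 hS) hr

theorem exists_steiner_polynomial (V : Finset E) :
    ∃ L : ℕ → ℝ, (∀ k, 0 ≤ L k) ∧ ∀ r : ℝ, 0 ≤ r →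
      μ.real (convexHull ℝ (V : Set E) + r • closedBall 0 1) =
        ∑ k ∈ Finset.range (finrank ℝ E + 1), L k * r ^ k := by
  classical
  refine ⟨fun k => ∑ S ∈ V.powerset with codim S = k, μ.real (steinerCell V S 1),
    fun k => Finset.sum_nonneg fun _ _ => measureReal_nonneg, fun r hr => ?_⟩
  have h_codim : ∀ S ∈ V.powerset, codim S ∈ Finset.range (finrank ℝ E + 1) := fun S _ =>
    Finset.mem_range.2 (Nat.lt_succ_of_le (Submodule.finrank_le _))
  rw [smul_unitClosedBall_of_nonneg hr, measureReal_def, measure_convexHull_add_closedBall μ V hr,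
    ENNReal.toReal_sum fun S hS => ENNReal.mul_ne_top ENNReal.ofReal_ne_top
      (measure_steinerCell_ne_top μ (Finset.mem_powerset.1 hS)),
    ← Finset.sum_fiberwise_of_maps_to h_codim]
  refine Finset.sum_congr rfl fun k _ => ?_
  rw [Finset.sum_mul]
  refine Finset.sum_congr rfl fun S hS => ?_
  rw [ENNReal.toReal_mul, ENNReal.toReal_ofReal (pow_nonneg hr _), (Finset.mem_filter.1 hS).2,
    mul_comm, measureReal_def]

end Measure

end Steiner

theorem steiner_coeff_bound_general (d : ℕ)
    (a : EuclideanSpace ℝ (Fin d)) (u : ℝ) (hu : 0 < u)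
    (V : Finset (EuclideanSpace ℝ (Fin d)))
    (R : Set (EuclideanSpace ℝ (Fin d)))
    (hR : R = convexHull ℝ (V : Set (EuclideanSpace ℝ (Fin d))))
    (hRB : R ⊆ Metric.closedBall a u) :
    ∃ L : ℕ → ℝ, (∀ k, k ≤ d → 0 ≤ L k) ∧
      (∀ lam : ℝ, 0 ≤ lam →
        (volume (R + lam • Metric.closedBall (0 : EuclideanSpace ℝ (Fin d)) 1)).toReal
          = ∑ k ∈ Finset.range (d + 1), L k * lam ^ k) ∧
      ∀ k, k ≤ d → L k ≤ (u + 1)^d * unitBallVol d := by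
  obtain ⟨L, hL_nonneg, hL⟩ := Steiner.exists_steiner_polynomial volume V
  rw [finrank_euclideanSpace_fin, ← hR] at hL
  refine ⟨L, fun k _ => hL_nonneg k, hL, fun k hk => ?_⟩
  have h_sub : R + (1 : ℝ) • closedBall 0 1 ⊆ closedBall a (u + 1) := by
    refine (Set.add_subset_add hRB (one_smul ℝ _).le).trans ?_
    rw [closedBall_add_closedBall hu.le zero_le_one, add_zero]
  calc L k ≤ ∑ j ∈ Finset.range (d + 1), L j :=
        Finset.single_le_sum (fun j _ => hL_nonneg j) (Finset.mem_range.2 (Nat.lt_succ_of_le hk))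
    _ = volume.real (R + (1 : ℝ) • closedBall 0 1) := by
        rw [hL 1 zero_le_one]
        simp
    _ ≤ volume.real (closedBall a (u + 1)) := measureReal_mono h_sub measure_closedBall_lt_top.ne
    _ = (u + 1) ^ d * unitBallVol d := by
        rw [Measure.addHaar_real_closedBall' _ _ (by linarith), finrank_euclideanSpace_fin]
        rfl

/-- Steiner coefficients of a polytope contained in a ball `B_d(a,u)` are bounded by
`(u+1)^d β_d`. -/
theorem steiner_coeff_bound (d : ℕ) (hd : 2 ≤ d)
    (a : EuclideanSpace ℝ (Fin d)) (u : ℝ) (hu : 0 < u)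
    (V : Finset (EuclideanSpace ℝ (Fin d))) (hV : V.Nonempty)
    (R : Set (EuclideanSpace ℝ (Fin d)))
    (hR : R = convexHull ℝ (V : Set (EuclideanSpace ℝ (Fin d))))
    (hRB : R ⊆ Metric.closedBall a u) :
    ∃ L : ℕ → ℝ, (∀ k, k ≤ d → 0 ≤ L k) ∧
      (∀ lam : ℝ, 0 ≤ lam →
        (volume (R + lam • Metric.closedBall (0 : EuclideanSpace ℝ (Fin d)) 1)).toReal
          = ∑ k ∈ Finset.range (d + 1), L k * lam ^ k) ∧
      ∀ k, k ≤ d → L k ≤ (u + 1)^d * unitBallVol d :=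
  steiner_coeff_bound_general d a u hu V R hR hRB
end
end
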